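/- Consider the multi-dimensional Lagrangian alignment system: μ₀ is a compactly supported Borel probability measure on ℝ^d (d ≥ 1); W : ℝ^d → ℝ is C¹ with W(x) = W(−x) and satisfies λ·|x − y|² ≤ ⟨∇W(x) − ∇W(y), x − y⟩ ≤ Λ·|x − y|² for all x, y ∈ ℝ^d, for some 0 < λ ≤ Λ; ψ : ℝ^d → [0,∞) is Borel measurable, radially symmetric and nonincreasing in |x|; η, v : [0,∞) × ℝ^d → ℝ^d are continuous in (t,x), continuously differentiable in t with time derivatives continuous in (t,x), and satisfy for all t ≥ 0 and x ∈ supp μ₀: ∂_t η(t,x) = v(t,x) and ∂_t v(t,x) = −∫ ∇W(η(t,x) − η(t,y)) dμ₀(y) − ∫ ψ(η(t,x) − η(t,y))·(v(t,x) − v(t,y)) dμ₀(y). Assume there exists ψ_m > 0 with ψ(x) ≥ ψ_m for all x ∈ ℝ^d, and there exist α ∈ (0,2), R > 0 and B > 0 such that ψ(x) ≤ B·|x|^{−α} for all 0 < |x| ≤ R. Then there exists a constant C > 0 such that for all t ≥ 1, ∬ (|η(t,x) − η(t,y)|² + |v(t,x) − v(t,y)|²) dμ₀(x) dμ₀(y)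 ≤ C·t^{−(2−α)/α}. -/

import Mathlib

open MeasureTheory Filter Topology Set intervalIntegral
open scoped RealInnerProductSpace

set_option linter.unusedSectionVars false
set_option linter.unusedVariables false
set_option maxHeartbeats 1000000

/-- The topological support of a Borel measure: points all of whose neighborhoods have
positive measure. -/
def msupp {X : Type*} [TopologicalSpace X] [MeasurableSpace X]
    (μ : MeasureTheory.Measure X) : Set X :=
  {x : X | ∀ U ∈ nhds x, μ U ≠ 0}

section Support

variable {X : Type*} [TopologicalSpace X] [MeasurableSpace X]

lemma msupp_isClosed (μ : Measure X) : IsClosed (msupp μ) := by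
  rw [← isOpen_compl_iff, isOpen_iff_mem_nhds]
  intro x hx
  simp only [msupp, Set.mem_compl_iff, Set.mem_setOf_eq, not_forall] at hx
  obtain ⟨U, hU, hU0⟩ := hx
  rw [not_not] at hU0
  filter_upwards [eventually_eventually_nhds.2 hU] with y hy
  simp only [msupp, Set.mem_compl_iff, Set.mem_setOf_eq, not_forall]
  exact ⟨U, hy, not_not.2 hU0⟩

lemma msupp_compl_null [SecondCountableTopology X] (μ : Measure X) :
    μ (msupp μ)ᶜ = 0 := by
  set B : Set (Set X) := {U ∈ TopologicalSpace.countableBasis X | μ U = 0} with hB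
  have hc : B.Countable := (TopologicalSpace.countable_countableBasis X).mono
    (Set.sep_subset _ _)
  have hnull : μ (⋃₀ B) = 0 := (measure_sUnion_null_iff hc).2 fun U hU => hU.2
  refine measure_mono_null (fun x hx => ?_) hnull
  simp only [msupp, Set.mem_compl_iff, Set.mem_setOf_eq, not_forall] at hx
  obtain ⟨U, hU, hU0⟩ := hx
  rw [not_not] at hU0
  obtain ⟨V, hVb, hxV, hVU⟩ :=
    (TopologicalSpace.isBasis_countableBasis X).mem_nhds_iff.1 hU
  exact ⟨V, ⟨hVb, measure_mono_null hVU hU0⟩, hxV⟩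

lemma msupp_ae (μ : Measure X) [SecondCountableTopology X] :
    ∀ᵐ x ∂μ, x ∈ msupp μ := by
  rw [ae_iff]
  exact msupp_compl_null μ

end Support


section HelpersA
set_option linter.unusedSectionVars false
variable {P : Type*} [TopologicalSpace P] [MeasurableSpace P] [OpensMeasurableSpace P]
  {μ : Measure P} [IsFiniteMeasure μ] {K : Set P}

lemma ae_memK' {α : Type*} [MeasurableSpace α] {μ : Measure α} {K : Set α}
    (hμK : μ Kᶜ = 0) : ∀ᵐ p ∂μ, p ∈ K := by
  rw [ae_iff]; exact hμK

lemma ae_memK (hμK : μ Kᶜ = 0) : ∀ᵐ p ∂μ, p ∈ K := ae_memK' hμK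

lemma integrable_of_boundK {F : Type*} [NormedAddCommGroup F] (hμK : μ Kᶜ = 0)
    {f : P → F} (hm : AEStronglyMeasurable f μ) {C : ℝ} (hb : ∀ p ∈ K, ‖f p‖ ≤ C) :
    Integrable f μ :=
  Integrable.mono' (integrable_const C) hm
    ((ae_memK hμK).mono fun p hp => hb p hp)

lemma bound_on_compact (hK : IsCompact K) {T : Set ℝ} (hT : IsCompact T)
    {G : ℝ → P → ℝ} (hG : Continuous (Function.uncurry G)) :
    ∃ C : ℝ, ∀ t ∈ T, ∀ p ∈ K, ‖G t p‖ ≤ C := by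
  obtain ⟨C, hC⟩ := (hT.prod hK).exists_bound_of_continuousOn hG.continuousOn
  exact ⟨C, fun t ht p hp => hC (t, p) ⟨ht, hp⟩⟩

lemma cont_param_integral (hK : IsCompact K) (hμK : μ Kᶜ = 0)
    {G : ℝ → P → ℝ} (hG : Continuous (Function.uncurry G)) :
    Continuous (fun t => ∫ p, G t p ∂μ) := by
  rw [continuous_iff_continuousAt]
  intro t₀
  obtain ⟨C, hC⟩ := bound_on_compact hK (isCompact_Icc (a := t₀ - 1) (b := t₀ + 1)) hG
  have hIcc : Set.Icc (t₀ - 1) (t₀ + 1) ∈ 𝓝 t₀ :=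
    Icc_mem_nhds (by linarith) (by linarith)
  refine tendsto_integral_filter_of_dominated_convergence (fun _ => C)
    (Eventually.of_forall fun t =>
      (hG.comp (continuous_const.prodMk continuous_id)).aestronglyMeasurable)
    ?_ (integrable_const C) ?_
  · filter_upwards [hIcc] with t ht
    filter_upwards [ae_memK hμK] with p hp
    exact hC t ht p hp
  · exact Eventually.of_forall fun p =>
      (hG.comp (continuous_id.prodMk continuous_const)).continuousAt

lemma deriv_param_integral (hK : IsCompact K) (hKm : MeasurableSet K) (hμK : μ Kᶜ = 0)
    {F G : ℝ → P → ℝ} (hF : Continuous (Function.uncurry F))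
    (hG : Continuous (Function.uncurry G))
    (hder : ∀ p, ∀ t, 0 ≤ t → HasDerivWithinAt (fun s => F s p) (G t p) (Ici 0) t)
    {t : ℝ} (ht : 0 ≤ t) :
    HasDerivWithinAt (fun s => ∫ p, F s p ∂μ) (∫ p, G t p ∂μ) (Ici 0) t := by
  have hg : Continuous (fun s => ∫ p, G s p ∂μ) := cont_param_integral hK hμK hG
  have hFint : ∀ s : ℝ, Integrable (fun p => F s p) μ := by
    intro s
    obtain ⟨C, hC⟩ := bound_on_compact hK (isCompact_singleton : IsCompact {s}) hF
    exact integrable_of_boundK hμK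
      (hF.comp (continuous_const.prodMk continuous_id)).aestronglyMeasurable
      (fun p hp => hC s rfl p hp)
  have key : ∀ u, 0 ≤ u →
      (∫ p, F u p ∂μ) = (∫ p, F 0 p ∂μ) + ∫ s in (0:ℝ)..u, (∫ p, G s p ∂μ) := by
    intro u hu
    obtain ⟨C, hC⟩ := bound_on_compact hK (isCompact_Icc (a := (0:ℝ)) (b := u)) hG
    set ν : Measure ℝ := volume.restrict (Set.Ioc (0:ℝ) u) with hν
    haveI : IsFiniteMeasure ν := by
      constructor
      rw [hν, Measure.restrict_apply_univ, Real.volume_Ioc]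
      exact ENNReal.ofReal_lt_top
    -- per-point FTC
    have hptw : ∀ p, F u p - F 0 p = ∫ s in (0:ℝ)..u, G s p := by
      intro p
      have hcont : ContinuousOn (fun s => F s p) (Icc 0 u) :=
        (hF.comp (continuous_id.prodMk continuous_const)).continuousOn
      have hDer : ∀ s ∈ Ioo (0:ℝ) u, HasDerivWithinAt (fun s => F s p) (G s p) (Ioi s) s :=
        fun s hs => (((hder p) s hs.1.le).hasDerivAt (Ici_mem_nhds hs.1)).hasDerivWithinAt
      have hint : IntervalIntegrable (fun s => G s p) volume 0 u :=
        (hG.comp (continuous_id.prodMk continuous_const)).continuousOn.intervalIntegrable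
      have := integral_eq_sub_of_hasDeriv_right_of_le hu hcont hDer hint
      linarith [this]
    -- uncurried integrand (p, s) ↦ G s p is integrable on μ.prod ν
    have hunc : Integrable (Function.uncurry (fun (p : P) (s : ℝ) => G s p)) (μ.prod ν) := by
      have hm : AEStronglyMeasurable (Function.uncurry (fun (p : P) (s : ℝ) => G s p))
          (μ.prod ν) := by
        have : Continuous (Function.uncurry (fun (p : P) (s : ℝ) => G s p)) :=
          hG.comp (continuous_snd.prodMk continuous_fst)
        exact this.aestronglyMeasurable
      refine Integrable.mono' (integrable_const C) hm ?_
      have hnull : (μ.prod ν) ((K ×ˢ Set.Ioc (0:ℝ) u)ᶜ) = 0 := by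
        rw [Set.compl_prod_eq_union]
        refine le_antisymm (le_trans (measure_union_le _ _) ?_) (by simp)
        have h1 : (μ.prod ν) (Kᶜ ×ˢ (Set.univ : Set ℝ)) = 0 := by
          rw [Measure.prod_prod, hμK, zero_mul]
        have h2 : (μ.prod ν) ((Set.univ : Set P) ×ˢ (Set.Ioc (0:ℝ) u)ᶜ) = 0 := by
          rw [Measure.prod_prod, hν, Measure.restrict_apply measurableSet_Ioc.compl]
          simp
        rw [h1, h2]; simp
      have hmem : ∀ᵐ z ∂(μ.prod ν), z ∈ K ×ˢ Set.Ioc (0:ℝ) u := ae_memK' hnull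
      filter_upwards [hmem] with z hz
      exact hC z.2 (Set.mem_Icc_of_Ioc hz.2) z.1 hz.1
    have swap := integral_integral_swap hunc
    calc (∫ p, F u p ∂μ)
        = ∫ p, (F 0 p + ∫ s in (0:ℝ)..u, G s p) ∂μ := by
          refine integral_congr_ae (Eventually.of_forall fun p => ?_)
          show F u p = F 0 p + ∫ s in (0:ℝ)..u, G s p
          have := hptw p; linarith
      _ = (∫ p, F 0 p ∂μ) + ∫ p, (∫ s in (0:ℝ)..u, G s p) ∂μ := by
          refine integral_add (hFint 0) ?_
          have : Integrable (fun p => ∫ s, G s p ∂ν) μ := hunc.integral_prod_left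
          simpa [integral_of_le hu] using this
      _ = (∫ p, F 0 p ∂μ) + ∫ s in (0:ℝ)..u, (∫ p, G s p ∂μ) := by
          congr 1
          simp only [integral_of_le hu]
          exact swap
  have h1 : HasDerivAt (fun uu => (∫ p, F 0 p ∂μ) + ∫ s in (0:ℝ)..uu, (∫ p, G s p ∂μ))
      (∫ p, G t p ∂μ) t := by
    refine HasDerivAt.const_add _ ?_
    exact integral_hasDerivAt_right (hg.intervalIntegrable 0 t)
      hg.stronglyMeasurable.stronglyMeasurableAtFilter hg.continuousAt
  exact h1.hasDerivWithinAt.congr (fun s hs => key s hs) (key t ht)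

end HelpersA

section Grad
variable {E : Type*} [NormedAddCommGroup E] [InnerProductSpace ℝ E] [CompleteSpace E]
variable {W : E → ℝ} {gradW : E → E}

lemma comp_grad_deriv (hW_grad : ∀ x, HasGradientAt W (gradW x) x)
    {s : Set ℝ} {x : ℝ} {path : ℝ → E} {p' : E}
    (hp : HasDerivWithinAt path p' s x) :
    HasDerivWithinAt (fun t => W (path t)) ⟪gradW (path x), p'⟫ s x := by
  have := (hW_grad (path x)).hasFDerivAt.comp_hasDerivWithinAt x hp
  simp only [InnerProductSpace.toDual_apply_apply] at this
  exact this

lemma grad_odd (hW_grad : ∀ x, HasGradientAt W (gradW x) x)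
    (hW_symm : ∀ x, W (-x) = W x) : ∀ x, gradW (-x) = -gradW x := by
  intro x
  have h1 : HasFDerivAt W (InnerProductSpace.toDual ℝ E (gradW (-x))) (-x) :=
    (hW_grad (-x)).hasFDerivAt
  have hneg : HasFDerivAt (fun y : E => -y) (-(ContinuousLinearMap.id ℝ E)) x := by
    exact (hasFDerivAt_id x).neg
  have hcomp : HasFDerivAt (fun y : E => W (-y))
      ((InnerProductSpace.toDual ℝ E (gradW (-x))).comp (-(ContinuousLinearMap.id ℝ E))) x :=
    h1.comp x hneg
  have hWe : (fun y : E => W (-y)) = W := funext hW_symm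
  rw [hWe] at hcomp
  have huniq := (hW_grad x).hasFDerivAt.unique hcomp
  have hv : ∀ v : E, ⟪gradW x, v⟫ = ⟪-gradW (-x), v⟫ := by
    intro v
    have := congrArg (fun L : E →L[ℝ] ℝ => L v) huniq
    simp only [InnerProductSpace.toDual_apply_apply, ContinuousLinearMap.comp_apply,
      ContinuousLinearMap.neg_apply, ContinuousLinearMap.id_apply] at this
    rw [this, inner_neg_right, inner_neg_left]
  have := ext_inner_right ℝ hv
  rw [this]; simp

lemma grad_zero (hW_grad : ∀ x, HasGradientAt W (gradW x) x)
    (hW_symm : ∀ x, W (-x) = W x) : gradW 0 = 0 := by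
  have h := grad_odd hW_grad hW_symm 0
  rw [neg_zero] at h
  have h2 : (2:ℝ) • gradW 0 = 0 := by
    rw [two_smul]; nth_rewrite 2 [h]; simp
  rcases smul_eq_zero.mp h2 with h3 | h3
  · norm_num at h3
  · exact h3

lemma W_bounds (hW_grad : ∀ x, HasGradientAt W (gradW x) x)
    (hgradW_cont : Continuous gradW) (h0 : gradW 0 = 0)
    {lam Lam : ℝ}
    (hW_convex : ∀ x y : E,
      lam * ‖x - y‖ ^ 2 ≤ ⟪gradW x - gradW y, x - y⟫ ∧
        ⟪gradW x - gradW y, x - y⟫ ≤ Lam * ‖x - y‖ ^ 2)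
    (z : E) :
    lam / 2 * ‖z‖ ^ 2 ≤ W z - W 0 ∧ W z - W 0 ≤ Lam / 2 * ‖z‖ ^ 2 := by
  have hline : ∀ s : ℝ, HasDerivAt (fun s : ℝ => W (s • z)) ⟪gradW (s • z), z⟫ s := by
    intro s
    have hp : HasDerivAt (fun s : ℝ => s • z) z s := by
      simpa using (hasDerivAt_id s).smul_const z
    have := comp_grad_deriv hW_grad (s := Set.univ) hp.hasDerivWithinAt
    rw [← hasDerivWithinAt_univ]
    exact this
  have hcont : Continuous fun s : ℝ => ⟪gradW (s • z), z⟫ :=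
    Continuous.inner (hgradW_cont.comp (continuous_id.smul continuous_const)) continuous_const
  have hFTC : ∫ s in (0:ℝ)..1, ⟪gradW (s • z), z⟫ = W z - W 0 := by
    have := intervalIntegral.integral_eq_sub_of_hasDerivAt
      (f := fun s : ℝ => W (s • z)) (fun s _ => hline s) (hcont.intervalIntegrable 0 1)
    simpa using this
  have hptw : ∀ s ∈ Set.Icc (0:ℝ) 1,
      lam * s * ‖z‖ ^ 2 ≤ ⟪gradW (s • z), z⟫ ∧
      ⟪gradW (s • z), z⟫ ≤ Lam * s * ‖z‖ ^ 2 := by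
    intro s hs
    rcases eq_or_lt_of_le hs.1 with h | h
    · rw [← h]
      simp [h0]
    · have hc := hW_convex (s • z) 0
      rw [sub_zero, h0, sub_zero] at hc
      have hin : ⟪gradW (s • z), s • z⟫ = s * ⟪gradW (s • z), z⟫ := real_inner_smul_right _ _ _
      have hn : ‖s • z‖ ^ 2 = s ^ 2 * ‖z‖ ^ 2 := by
        rw [norm_smul, mul_pow, Real.norm_eq_abs, sq_abs]
      rw [hin, hn] at hc
      constructor <;> nlinarith [hc.1, hc.2, h]
  have hi1 : IntervalIntegrable (fun s : ℝ => lam * s * ‖z‖ ^ 2) volume 0 1 :=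
    (by continuity : Continuous fun s : ℝ => lam * s * ‖z‖ ^ 2).intervalIntegrable 0 1
  have hi2 : IntervalIntegrable (fun s : ℝ => Lam * s * ‖z‖ ^ 2) volume 0 1 :=
    (by continuity : Continuous fun s : ℝ => Lam * s * ‖z‖ ^ 2).intervalIntegrable 0 1
  have e1 : ∫ s in (0:ℝ)..1, lam * s * ‖z‖ ^ 2 = lam / 2 * ‖z‖ ^ 2 := by
    have : (fun s : ℝ => lam * s * ‖z‖ ^ 2) = fun s : ℝ => (lam * ‖z‖ ^ 2) * s := by
      funext s; ring
    rw [this, intervalIntegral.integral_const_mul, integral_id]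
    ring
  have e2 : ∫ s in (0:ℝ)..1, Lam * s * ‖z‖ ^ 2 = Lam / 2 * ‖z‖ ^ 2 := by
    have : (fun s : ℝ => Lam * s * ‖z‖ ^ 2) = fun s : ℝ => (Lam * ‖z‖ ^ 2) * s := by
      funext s; ring
    rw [this, intervalIntegral.integral_const_mul, integral_id]
    ring
  have h01 : (0:ℝ) ≤ 1 := by norm_num
  constructor
  · rw [← hFTC, ← e1]
    exact intervalIntegral.integral_mono_on h01 hi1 (hcont.intervalIntegrable 0 1)
      (fun s hs => (hptw s hs).1)
  · rw [← hFTC, ← e2]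
    exact intervalIntegral.integral_mono_on h01 (hcont.intervalIntegrable 0 1) hi2
      (fun s hs => (hptw s hs).2)

lemma deriv_normsq {s : Set ℝ} {x : ℝ} {w : ℝ → E} {w' : E}
    (h : HasDerivWithinAt w w' s x) :
    HasDerivWithinAt (fun t => ‖w t‖ ^ 2) (2 * ⟪w', w x⟫) s x := by
  have h2 := HasDerivWithinAt.inner ℝ h h
  have hfe : (fun t => ⟪w t, w t⟫) = fun t => ‖w t‖ ^ 2 := by
    funext t; exact real_inner_self_eq_norm_sq _
  rw [hfe] at h2
  have e : ⟪w x, w'⟫ + ⟪w', w x⟫ = 2 * ⟪w', w x⟫ := by rw [real_inner_comm]; ring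
  rw [e] at h2; exact h2

end Grad

section Star
set_option linter.unusedSectionVars false
set_option maxHeartbeats 1000000

variable {E : Type*} [NormedAddCommGroup E] [InnerProductSpace ℝ E] [CompleteSpace E]
  [MeasurableSpace E] [BorelSpace E] [SecondCountableTopology E]

lemma ae_memK'' {α : Type*} [MeasurableSpace α] {μ : Measure α} {K : Set α}
    (hμK : μ Kᶜ = 0) : ∀ᵐ p ∂μ, p ∈ K := by
  rw [ae_iff]; exact hμK

lemma prod_compl_null {μ₀ : Measure E} [IsProbabilityMeasure μ₀] {S : Set E}
    (hSm : MeasurableSet S) (hSnull : μ₀ Sᶜ = 0) :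
    (μ₀.prod μ₀) (S ×ˢ S)ᶜ = 0 := by
  rw [Set.compl_prod_eq_union]
  refine le_antisymm (le_trans (measure_union_le _ _) ?_) (by simp)
  have h1 : (μ₀.prod μ₀) (Sᶜ ×ˢ (Set.univ : Set E)) = 0 := by
    rw [Measure.prod_prod, hSnull, zero_mul]
  have h2 : (μ₀.prod μ₀) ((Set.univ : Set E) ×ˢ Sᶜ) = 0 := by
    rw [Measure.prod_prod, hSnull, mul_zero]
  rw [h1, h2]; simp

lemma star_lemma (μ₀ : Measure E) [IsProbabilityMeasure μ₀] {S : Set E}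
    (hS : IsCompact S) (hSnull : μ₀ Sᶜ = 0)
    (gradW : E → E) (hgradW_cont : Continuous gradW) (hodd : ∀ x, gradW (-x) = -gradW x)
    (ψ : E → ℝ) (hψ_meas : Measurable ψ) {M : ℝ} (hψM : ∀ z, ‖ψ z‖ ≤ M)
    (hψeven : ∀ z, ψ (-z) = ψ z)
    (a b cc u : E → E) (hac : Continuous a) (hbc : Continuous b) (hccc : Continuous cc)
    (huc : Continuous u)
    (hcceq : ∀ x ∈ S, cc x =
      -(∫ y, gradW (a x - a y) ∂μ₀) - ∫ y, ψ (a x - a y) • (b x - b y) ∂μ₀) :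
    ∫ p, ⟪cc p.1 - cc p.2, u p.1 - u p.2⟫ ∂(μ₀.prod μ₀)
      = -(∫ p, ⟪gradW (a p.1 - a p.2), u p.1 - u p.2⟫ ∂(μ₀.prod μ₀))
        - ∫ p, ψ (a p.1 - a p.2) * ⟪b p.1 - b p.2, u p.1 - u p.2⟫ ∂(μ₀.prod μ₀) := by
  set μ2 := μ₀.prod μ₀ with hμ2
  have hSm : MeasurableSet S := hS.isClosed.measurableSet
  have hK2 : IsCompact (S ×ˢ S) := hS.prod hS
  have hμK2 : μ2 (S ×ˢ S)ᶜ = 0 := prod_compl_null hSm hSnull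
  -- integrability helpers
  have int1E : ∀ g : E → E, Continuous g → Integrable g μ₀ := by
    intro g hg
    obtain ⟨C, hC⟩ := hS.exists_bound_of_continuousOn hg.continuousOn
    exact Integrable.mono' (integrable_const C) hg.aestronglyMeasurable
      ((ae_memK'' hSnull).mono fun p hp => hC p hp)
  have int2R : ∀ g : E × E → ℝ, Continuous g → Integrable g μ2 := by
    intro g hg
    obtain ⟨C, hC⟩ := hK2.exists_bound_of_continuousOn hg.continuousOn
    exact Integrable.mono' (integrable_const C) hg.aestronglyMeasurable
      ((ae_memK'' hμK2).mono fun p hp => hC p hp)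
  have int2ψ : ∀ g : E × E → ℝ, Continuous g →
      Integrable (fun p : E × E => ψ (a p.1 - a p.2) * g p) μ2 := by
    intro g hg
    obtain ⟨C, hC⟩ := hK2.exists_bound_of_continuousOn hg.continuousOn
    have hm : AEStronglyMeasurable (fun p : E × E => ψ (a p.1 - a p.2) * g p) μ2 := by
      refine AEStronglyMeasurable.mul ?_ hg.aestronglyMeasurable
      exact (hψ_meas.comp ((hac.comp continuous_fst).sub
        (hac.comp continuous_snd)).measurable).aestronglyMeasurable
    refine Integrable.mono' (integrable_const (M * C)) hm ?_
    filter_upwards [ae_memK'' hμK2] with p hp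
    have h1 := hψM (a p.1 - a p.2)
    have h2 := hC p hp
    have hMC : 0 ≤ M := le_trans (norm_nonneg _) (hψM 0)
    calc ‖ψ (a p.1 - a p.2) * g p‖ = ‖ψ (a p.1 - a p.2)‖ * ‖g p‖ := norm_mul _ _
      _ ≤ M * C := by
          apply mul_le_mul h1 h2 (norm_nonneg _) hMC
  have int1ψE : ∀ x : E, Integrable (fun y => ψ (a x - a y) • (b x - b y)) μ₀ := by
    intro x
    have hgc : Continuous (fun y => b x - b y) := continuous_const.sub hbc
    obtain ⟨C, hC⟩ := hS.exists_bound_of_continuousOn hgc.continuousOn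
    have hm : AEStronglyMeasurable (fun y => ψ (a x - a y) • (b x - b y)) μ₀ := by
      refine AEStronglyMeasurable.smul ?_ hgc.aestronglyMeasurable
      exact (hψ_meas.comp (continuous_const.sub hac).measurable).aestronglyMeasurable
    refine Integrable.mono' (integrable_const (M * C)) hm ?_
    filter_upwards [ae_memK'' hSnull] with y hy
    have hMC : 0 ≤ M := le_trans (norm_nonneg _) (hψM 0)
    calc ‖ψ (a x - a y) • (b x - b y)‖ = ‖ψ (a x - a y)‖ * ‖b x - b y‖ := norm_smul _ _
      _ ≤ M * C := mul_le_mul (hψM _) (hC y hy) (norm_nonneg _) hMC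
  -- continuity of basic integrands
  have hcccΔ : Continuous (fun p : E × E => ⟪cc p.1, u p.1 - u p.2⟫) :=
    Continuous.inner (hccc.comp continuous_fst)
      ((huc.comp continuous_fst).sub (huc.comp continuous_snd))
  set mu := ∫ y, u y ∂μ₀ with hmu
  have haΔc : Continuous (fun p : E × E => a p.1 - a p.2) :=
    (hac.comp continuous_fst).sub (hac.comp continuous_snd)
  have hbΔc : Continuous (fun p : E × E => b p.1 - b p.2) :=
    (hbc.comp continuous_fst).sub (hbc.comp continuous_snd)
  have huΔc : Continuous (fun p : E × E => u p.1 - u p.2) :=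
    (huc.comp continuous_fst).sub (huc.comp continuous_snd)
  -- step 1
  have step1 : ∫ p, ⟪cc p.1 - cc p.2, u p.1 - u p.2⟫ ∂μ2
      = 2 * ∫ p, ⟪cc p.1, u p.1 - u p.2⟫ ∂μ2 := by
    have hswap : ∫ p, ⟪cc p.2, u p.2 - u p.1⟫ ∂μ2 = ∫ p, ⟪cc p.1, u p.1 - u p.2⟫ ∂μ2 := by
      have := MeasureTheory.integral_prod_swap (μ := μ₀) (ν := μ₀)
        (fun p : E × E => ⟪cc p.1, u p.1 - u p.2⟫)
      exact this
    have hsplit : ∫ p, ⟪cc p.1 - cc p.2, u p.1 - u p.2⟫ ∂μ2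
        = (∫ p, ⟪cc p.1, u p.1 - u p.2⟫ ∂μ2) + ∫ p, ⟪cc p.2, u p.2 - u p.1⟫ ∂μ2 := by
      have hc2 : Continuous fun p : E × E => ⟪cc p.2, u p.2 - u p.1⟫ := by
        exact Continuous.inner (hccc.comp continuous_snd)
          ((huc.comp continuous_snd).sub (huc.comp continuous_fst))
      rw [← integral_add (int2R _ hcccΔ) (int2R _ hc2)]
      refine integral_congr_ae (Eventually.of_forall fun p => ?_)
      beta_reduce
      simp only [inner_sub_left, inner_sub_right]
      ring
    rw [hsplit, hswap]; ring
  -- step 2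
  have step2 : ∫ p, ⟪cc p.1, u p.1 - u p.2⟫ ∂μ2 = ∫ x, ⟪cc x, u x - mu⟫ ∂μ₀ := by
    rw [MeasureTheory.integral_prod _ (int2R _ hcccΔ)]
    refine integral_congr_ae (Eventually.of_forall fun x => ?_)
    show ∫ y, ⟪cc x, u x - u y⟫ ∂μ₀ = ⟪cc x, u x - mu⟫
    have hui : Integrable (fun y => u x - u y) μ₀ :=
      (integrable_const (u x)).sub (int1E u huc)
    calc ∫ y, ⟪cc x, u x - u y⟫ ∂μ₀
        = ⟪cc x, ∫ y, (u x - u y) ∂μ₀⟫ := integral_inner (𝕜 := ℝ) hui (cc x)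
      _ = ⟪cc x, u x - mu⟫ := by
          have e : ∫ y, (u x - u y) ∂μ₀ = (∫ _y : E, u x ∂μ₀) - ∫ y, u y ∂μ₀ :=
            integral_sub (integrable_const (u x)) (int1E u huc)
          rw [e, MeasureTheory.integral_const]
          simp [hmu]
  -- step 3
  have step3 : ∫ x, ⟪cc x, u x - mu⟫ ∂μ₀
      = -(∫ p, ⟪gradW (a p.1 - a p.2), u p.1 - mu⟫ ∂μ2)
        - ∫ p, ψ (a p.1 - a p.2) * ⟪b p.1 - b p.2, u p.1 - mu⟫ ∂μ2 := by
    have hG1c : Continuous (fun p : E × E => ⟪gradW (a p.1 - a p.2), u p.1 - mu⟫) :=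
      Continuous.inner (hgradW_cont.comp haΔc) ((huc.comp continuous_fst).sub continuous_const)
    have hG1int : Integrable (fun p : E × E => ⟪gradW (a p.1 - a p.2), u p.1 - mu⟫) μ2 :=
      int2R _ hG1c
    have hG2int : Integrable
        (fun p : E × E => ψ (a p.1 - a p.2) * ⟪b p.1 - b p.2, u p.1 - mu⟫) μ2 :=
      int2ψ _ (Continuous.inner hbΔc ((huc.comp continuous_fst).sub continuous_const))
    have hx : ∀ᵐ x ∂μ₀, ⟪cc x, u x - mu⟫
        = -(∫ y, ⟪gradW (a x - a y), u x - mu⟫ ∂μ₀)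
          - ∫ y, ψ (a x - a y) * ⟪b x - b y, u x - mu⟫ ∂μ₀ := by
      filter_upwards [ae_memK'' hSnull] with x hx
      beta_reduce
      rw [hcceq x hx]
      have hA : Integrable (fun y => gradW (a x - a y)) μ₀ :=
        int1E _ (hgradW_cont.comp (continuous_const.sub hac))
      have hF : Integrable (fun y => ψ (a x - a y) • (b x - b y)) μ₀ := int1ψE x
      have e1 : ∫ y, ⟪gradW (a x - a y), u x - mu⟫ ∂μ₀
          = ⟪∫ y, gradW (a x - a y) ∂μ₀, u x - mu⟫ := by
        calc ∫ y, ⟪gradW (a x - a y), u x - mu⟫ ∂μ₀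
            = ∫ y, ⟪u x - mu, gradW (a x - a y)⟫ ∂μ₀ :=
              integral_congr_ae (Eventually.of_forall fun y => real_inner_comm _ _)
          _ = ⟪u x - mu, ∫ y, gradW (a x - a y) ∂μ₀⟫ := integral_inner hA _
          _ = ⟪∫ y, gradW (a x - a y) ∂μ₀, u x - mu⟫ := real_inner_comm _ _
      have e2 : ∫ y, ψ (a x - a y) * ⟪b x - b y, u x - mu⟫ ∂μ₀
          = ⟪∫ y, ψ (a x - a y) • (b x - b y) ∂μ₀, u x - mu⟫ := by
        calc ∫ y, ψ (a x - a y) * ⟪b x - b y, u x - mu⟫ ∂μ₀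
            = ∫ y, ⟪u x - mu, ψ (a x - a y) • (b x - b y)⟫ ∂μ₀ := by
              refine integral_congr_ae (Eventually.of_forall fun y => ?_)
              beta_reduce
              rw [real_inner_smul_right, real_inner_comm]
          _ = ⟪u x - mu, ∫ y, ψ (a x - a y) • (b x - b y) ∂μ₀⟫ := integral_inner hF _
          _ = ⟪∫ y, ψ (a x - a y) • (b x - b y) ∂μ₀, u x - mu⟫ := real_inner_comm _ _
      rw [e1, e2, inner_sub_left, inner_neg_left]
    calc ∫ x, ⟪cc x, u x - mu⟫ ∂μ₀
        = ∫ x, (-(∫ y, ⟪gradW (a x - a y), u x - mu⟫ ∂μ₀)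
            - ∫ y, ψ (a x - a y) * ⟪b x - b y, u x - mu⟫ ∂μ₀) ∂μ₀ := integral_congr_ae hx
      _ = (∫ x, (-(∫ y, ⟪gradW (a x - a y), u x - mu⟫ ∂μ₀)) ∂μ₀)
            - ∫ x, ∫ y, ψ (a x - a y) * ⟪b x - b y, u x - mu⟫ ∂μ₀ ∂μ₀ := by
          have hneg : Integrable
              (fun x => ∫ y, ⟪gradW (a x - a y), u x - mu⟫ ∂μ₀) μ₀ :=
            hG1int.integral_prod_left
          have hg2 : Integrable
              (fun x => ∫ y, ψ (a x - a y) * ⟪b x - b y, u x - mu⟫ ∂μ₀) μ₀ :=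
            hG2int.integral_prod_left
          exact integral_sub hneg.neg hg2
      _ = -(∫ x, ∫ y, ⟪gradW (a x - a y), u x - mu⟫ ∂μ₀ ∂μ₀)
            - ∫ x, ∫ y, ψ (a x - a y) * ⟪b x - b y, u x - mu⟫ ∂μ₀ ∂μ₀ := by
          rw [MeasureTheory.integral_neg]
      _ = -(∫ p, ⟪gradW (a p.1 - a p.2), u p.1 - mu⟫ ∂μ2)
            - ∫ p, ψ (a p.1 - a p.2) * ⟪b p.1 - b p.2, u p.1 - mu⟫ ∂μ2 := by
          have e1 : ∫ p, ⟪gradW (a p.1 - a p.2), u p.1 - mu⟫ ∂μ2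
              = ∫ x, ∫ y, ⟪gradW (a x - a y), u x - mu⟫ ∂μ₀ ∂μ₀ :=
            MeasureTheory.integral_prod _ hG1int
          have e2 : ∫ p, ψ (a p.1 - a p.2) * ⟪b p.1 - b p.2, u p.1 - mu⟫ ∂μ2
              = ∫ x, ∫ y, ψ (a x - a y) * ⟪b x - b y, u x - mu⟫ ∂μ₀ ∂μ₀ :=
            MeasureTheory.integral_prod _ hG2int
          rw [e1, e2]
  -- step 4
  have step4 : 2 * ∫ p, ⟪gradW (a p.1 - a p.2), u p.1 - mu⟫ ∂μ2
      = ∫ p, ⟪gradW (a p.1 - a p.2), u p.1 - u p.2⟫ ∂μ2 := by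
    have hswap : ∫ p, ⟪gradW (a p.2 - a p.1), u p.2 - mu⟫ ∂μ2
        = ∫ p, ⟪gradW (a p.1 - a p.2), u p.1 - mu⟫ ∂μ2 :=
      MeasureTheory.integral_prod_swap (μ := μ₀) (ν := μ₀)
        (fun p : E × E => ⟪gradW (a p.1 - a p.2), u p.1 - mu⟫)
    have hG1c : Continuous (fun p : E × E => ⟪gradW (a p.1 - a p.2), u p.1 - mu⟫) :=
      Continuous.inner (hgradW_cont.comp haΔc) ((huc.comp continuous_fst).sub continuous_const)
    have hG1c' : Continuous (fun p : E × E => ⟪gradW (a p.2 - a p.1), u p.2 - mu⟫) :=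
      Continuous.inner (hgradW_cont.comp ((hac.comp continuous_snd).sub
        (hac.comp continuous_fst))) ((huc.comp continuous_snd).sub continuous_const)
    have hsum : ∫ p, ⟪gradW (a p.1 - a p.2), u p.1 - u p.2⟫ ∂μ2
        = (∫ p, ⟪gradW (a p.1 - a p.2), u p.1 - mu⟫ ∂μ2)
          + ∫ p, ⟪gradW (a p.2 - a p.1), u p.2 - mu⟫ ∂μ2 := by
      rw [← integral_add (int2R _ hG1c) (int2R _ hG1c')]
      refine integral_congr_ae (Eventually.of_forall fun p => ?_)
      beta_reduce
      have : gradW (a p.2 - a p.1) = -gradW (a p.1 - a p.2) := by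
        rw [← neg_sub (a p.1) (a p.2), hodd]
      rw [this]
      simp only [inner_neg_left, inner_sub_right]
      ring
    rw [hsum, hswap]; ring
  -- step 5
  have step5 : 2 * ∫ p, ψ (a p.1 - a p.2) * ⟪b p.1 - b p.2, u p.1 - mu⟫ ∂μ2
      = ∫ p, ψ (a p.1 - a p.2) * ⟪b p.1 - b p.2, u p.1 - u p.2⟫ ∂μ2 := by
    have hswap : ∫ p, ψ (a p.2 - a p.1) * ⟪b p.2 - b p.1, u p.2 - mu⟫ ∂μ2
        = ∫ p, ψ (a p.1 - a p.2) * ⟪b p.1 - b p.2, u p.1 - mu⟫ ∂μ2 :=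
      MeasureTheory.integral_prod_swap (μ := μ₀) (ν := μ₀)
        (fun p : E × E => ψ (a p.1 - a p.2) * ⟪b p.1 - b p.2, u p.1 - mu⟫)
    have hG2int : Integrable
        (fun p : E × E => ψ (a p.1 - a p.2) * ⟪b p.1 - b p.2, u p.1 - mu⟫) μ2 :=
      int2ψ _ (Continuous.inner hbΔc ((huc.comp continuous_fst).sub continuous_const))
    have hG2swap_int : Integrable
        (fun p : E × E => ψ (a p.2 - a p.1) * ⟪b p.2 - b p.1, u p.2 - mu⟫) μ2 := by
      have h0 := int2ψ (fun p : E × E => ⟪b p.2 - b p.1, u p.2 - mu⟫)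
        (Continuous.inner ((hbc.comp continuous_snd).sub (hbc.comp continuous_fst))
          ((huc.comp continuous_snd).sub continuous_const))
      refine h0.congr (Eventually.of_forall fun p => ?_)
      beta_reduce
      have h1 : ψ (a p.2 - a p.1) = ψ (a p.1 - a p.2) := by
        rw [← neg_sub (a p.1) (a p.2), hψeven]
      rw [h1]
    have hsum : ∫ p, ψ (a p.1 - a p.2) * ⟪b p.1 - b p.2, u p.1 - u p.2⟫ ∂μ2
        = (∫ p, ψ (a p.1 - a p.2) * ⟪b p.1 - b p.2, u p.1 - mu⟫ ∂μ2)
          + ∫ p, ψ (a p.2 - a p.1) * ⟪b p.2 - b p.1, u p.2 - mu⟫ ∂μ2 := by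
      rw [← integral_add hG2int hG2swap_int]
      refine integral_congr_ae (Eventually.of_forall fun p => ?_)
      beta_reduce
      have h1 : ψ (a p.2 - a p.1) = ψ (a p.1 - a p.2) := by
        rw [← neg_sub (a p.1) (a p.2), hψeven]
      have h2 : b p.2 - b p.1 = -(b p.1 - b p.2) := by rw [neg_sub]
      rw [h1, h2]
      simp only [inner_neg_left, inner_sub_right]
      ring
    rw [hsum, hswap]; ring
  rw [step1, step2, step3]
  linarith [step4, step5]

end Star

section PerTime
set_option linter.unusedSectionVars false
set_option maxHeartbeats 1000000

variable {E : Type*} [NormedAddCommGroup E] [InnerProductSpace ℝ E] [CompleteSpace E]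
  [MeasurableSpace E] [BorelSpace E] [SecondCountableTopology E]

lemma per_time_bound (μ₀ : Measure E) [IsProbabilityMeasure μ₀] {S : Set E}
    (hS : IsCompact S) (hSnull : μ₀ Sᶜ = 0)
    (W : E → ℝ) (hW_cont : Continuous W)
    (gradW : E → E) (hgradW_cont : Continuous gradW) (hodd : ∀ x, gradW (-x) = -gradW x)
    {lam Lam : ℝ} (hlam : 0 < lam) (hLam : lam ≤ Lam)
    (hconv1 : ∀ z : E, lam * ‖z‖ ^ 2 ≤ ⟪gradW z, z⟫)
    (hWlow : ∀ z : E, lam / 2 * ‖z‖ ^ 2 ≤ W z - W 0)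
    (hWup : ∀ z : E, W z - W 0 ≤ Lam / 2 * ‖z‖ ^ 2)
    (ψ : E → ℝ) (hψ_meas : Measurable ψ) {M ψm : ℝ} (hψm : 0 < ψm)
    (hψ_lb : ∀ z, ψm ≤ ψ z) (hψub : ∀ z, ψ z ≤ M) (hψ_nonneg : ∀ z, 0 ≤ ψ z)
    (hψeven : ∀ z, ψ (-z) = ψ z)
    (a b cc : E → E) (hac : Continuous a) (hbc : Continuous b) (hccc : Continuous cc)
    (hcceq : ∀ x ∈ S, cc x =
      -(∫ y, gradW (a x - a y) ∂μ₀) - ∫ y, ψ (a x - a y) • (b x - b y) ∂μ₀)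
    {ε c c₀ : ℝ} (hε0 : 0 < ε) (hε1 : ε ≤ 1) (hεlam : ε ≤ lam)
    (hεψ : ε * (1 + M ^ 2 / (2 * lam)) ≤ ψm)
    (hc0 : 0 < c) (hc1 : c * (Lam + 1) ≤ ε * lam / 2) (hc2 : c ≤ ψm / 2)
    (hc₀ : c₀ = min lam 1 / 2) :
    (∫ p, (2 * ⟪cc p.1 - cc p.2, b p.1 - b p.2⟫
        + 2 * ⟪gradW (a p.1 - a p.2), b p.1 - b p.2⟫
        + ε * (‖b p.1 - b p.2‖ ^ 2 + ⟪cc p.1 - cc p.2, a p.1 - a p.2⟫)) ∂(μ₀.prod μ₀))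
      ≤ -c * (∫ p, (‖b p.1 - b p.2‖ ^ 2 + 2 * (W (a p.1 - a p.2) - W 0)
          + ε * ⟪a p.1 - a p.2, b p.1 - b p.2⟫) ∂(μ₀.prod μ₀))
    ∧ c₀ * ((∫ p, ‖a p.1 - a p.2‖ ^ 2 ∂(μ₀.prod μ₀))
          + ∫ p, ‖b p.1 - b p.2‖ ^ 2 ∂(μ₀.prod μ₀))
        ≤ ∫ p, (‖b p.1 - b p.2‖ ^ 2 + 2 * (W (a p.1 - a p.2) - W 0)
          + ε * ⟪a p.1 - a p.2, b p.1 - b p.2⟫) ∂(μ₀.prod μ₀) := by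
  set μ2 := μ₀.prod μ₀ with hμ2
  have hSm : MeasurableSet S := hS.isClosed.measurableSet
  have hK2 : IsCompact (S ×ˢ S) := hS.prod hS
  have hμK2 : μ2 (S ×ˢ S)ᶜ = 0 := prod_compl_null hSm hSnull
  have hM0 : 0 < M := lt_of_lt_of_le hψm (le_trans (hψ_lb 0) (hψub 0))
  have hψMn : ∀ z, ‖ψ z‖ ≤ M := fun z => by
    rw [Real.norm_eq_abs, abs_of_nonneg (hψ_nonneg z)]; exact hψub z
  -- integrability helpers
  have int2R : ∀ g : E × E → ℝ, Continuous g → Integrable g μ2 := by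
    intro g hg
    obtain ⟨C, hC⟩ := hK2.exists_bound_of_continuousOn hg.continuousOn
    exact Integrable.mono' (integrable_const C) hg.aestronglyMeasurable
      ((ae_memK'' hμK2).mono fun p hp => hC p hp)
  have int2ψ : ∀ g : E × E → ℝ, Continuous g →
      Integrable (fun p : E × E => ψ (a p.1 - a p.2) * g p) μ2 := by
    intro g hg
    obtain ⟨C, hC⟩ := hK2.exists_bound_of_continuousOn hg.continuousOn
    have hm : AEStronglyMeasurable (fun p : E × E => ψ (a p.1 - a p.2) * g p) μ2 := by
      refine AEStronglyMeasurable.mul ?_ hg.aestronglyMeasurable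
      exact (hψ_meas.comp ((hac.comp continuous_fst).sub
        (hac.comp continuous_snd)).measurable).aestronglyMeasurable
    refine Integrable.mono' (integrable_const (M * C)) hm ?_
    filter_upwards [ae_memK'' hμK2] with p hp
    calc ‖ψ (a p.1 - a p.2) * g p‖ = ‖ψ (a p.1 - a p.2)‖ * ‖g p‖ := norm_mul _ _
      _ ≤ M * C := mul_le_mul (hψMn _) (hC p hp) (norm_nonneg _) hM0.le
  -- continuity of sections
  have haΔc : Continuous (fun p : E × E => a p.1 - a p.2) :=
    (hac.comp continuous_fst).sub (hac.comp continuous_snd)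
  have hbΔc : Continuous (fun p : E × E => b p.1 - b p.2) :=
    (hbc.comp continuous_fst).sub (hbc.comp continuous_snd)
  have hccΔc : Continuous (fun p : E × E => cc p.1 - cc p.2) :=
    (hccc.comp continuous_fst).sub (hccc.comp continuous_snd)
  -- named integrals
  set X := ∫ p, ‖a p.1 - a p.2‖ ^ 2 ∂μ2 with hX
  set V := ∫ p, ‖b p.1 - b p.2‖ ^ 2 ∂μ2 with hV
  set Y := ∫ p, ⟪a p.1 - a p.2, b p.1 - b p.2⟫ ∂μ2 with hY
  set P := ∫ p, (W (a p.1 - a p.2) - W 0) ∂μ2 with hP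
  set I1 := ∫ p, ⟪cc p.1 - cc p.2, b p.1 - b p.2⟫ ∂μ2 with hI1
  set I2 := ∫ p, ⟪gradW (a p.1 - a p.2), b p.1 - b p.2⟫ ∂μ2 with hI2
  set I3 := ∫ p, ⟪cc p.1 - cc p.2, a p.1 - a p.2⟫ ∂μ2 with hI3
  set I4 := ∫ p, ⟪gradW (a p.1 - a p.2), a p.1 - a p.2⟫ ∂μ2 with hI4
  set I5 := ∫ p, ψ (a p.1 - a p.2) * ⟪b p.1 - b p.2, b p.1 - b p.2⟫ ∂μ2 with hI5
  set I6 := ∫ p, ψ (a p.1 - a p.2) * ⟪b p.1 - b p.2, a p.1 - a p.2⟫ ∂μ2 with hI6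
  -- integrability of each
  have iX : Integrable (fun p : E × E => ‖a p.1 - a p.2‖ ^ 2) μ2 :=
    int2R _ (haΔc.norm.pow 2)
  have iV : Integrable (fun p : E × E => ‖b p.1 - b p.2‖ ^ 2) μ2 :=
    int2R _ (hbΔc.norm.pow 2)
  have iY : Integrable (fun p : E × E => ⟪a p.1 - a p.2, b p.1 - b p.2⟫) μ2 :=
    int2R _ (haΔc.inner hbΔc)
  have iP : Integrable (fun p : E × E => W (a p.1 - a p.2) - W 0) μ2 :=
    int2R _ ((hW_cont.comp haΔc).sub continuous_const)
  have iI1 : Integrable (fun p : E × E => ⟪cc p.1 - cc p.2, b p.1 - b p.2⟫) μ2 :=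
    int2R _ (hccΔc.inner hbΔc)
  have iI2 : Integrable (fun p : E × E => ⟪gradW (a p.1 - a p.2), b p.1 - b p.2⟫) μ2 :=
    int2R _ ((hgradW_cont.comp haΔc).inner hbΔc)
  have iI3 : Integrable (fun p : E × E => ⟪cc p.1 - cc p.2, a p.1 - a p.2⟫) μ2 :=
    int2R _ (hccΔc.inner haΔc)
  have iI4 : Integrable (fun p : E × E => ⟪gradW (a p.1 - a p.2), a p.1 - a p.2⟫) μ2 :=
    int2R _ ((hgradW_cont.comp haΔc).inner haΔc)
  have iI5 : Integrable (fun p : E × E =>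
      ψ (a p.1 - a p.2) * ⟪b p.1 - b p.2, b p.1 - b p.2⟫) μ2 :=
    int2ψ _ (hbΔc.inner hbΔc)
  have iI6 : Integrable (fun p : E × E =>
      ψ (a p.1 - a p.2) * ⟪b p.1 - b p.2, a p.1 - a p.2⟫) μ2 :=
    int2ψ _ (hbΔc.inner haΔc)
  have hX0 : 0 ≤ X := integral_nonneg fun p => by positivity
  have hV0 : 0 ≤ V := integral_nonneg fun p => by positivity
  -- lambda-form integrability of combined integrands
  have iXV : Integrable (fun p : E × E => ‖a p.1 - a p.2‖ ^ 2 + ‖b p.1 - b p.2‖ ^ 2) μ2 :=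
    iX.add iV
  have iXVn : Integrable
      (fun p : E × E => -(‖a p.1 - a p.2‖ ^ 2 + ‖b p.1 - b p.2‖ ^ 2)) μ2 := iXV.neg
  have iY2 : Integrable (fun p : E × E => 2 * ⟪a p.1 - a p.2, b p.1 - b p.2⟫) μ2 :=
    iY.const_mul 2
  have iXlam : Integrable (fun p : E × E => lam * ‖a p.1 - a p.2‖ ^ 2) μ2 := iX.const_mul lam
  have iXlam2 : Integrable (fun p : E × E => lam / 2 * ‖a p.1 - a p.2‖ ^ 2) μ2 :=
    iX.const_mul (lam / 2)
  have iXLam2 : Integrable (fun p : E × E => Lam / 2 * ‖a p.1 - a p.2‖ ^ 2) μ2 :=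
    iX.const_mul (Lam / 2)
  have iVψm : Integrable (fun p : E × E => ψm * ‖b p.1 - b p.2‖ ^ 2) μ2 := iV.const_mul ψm
  have iI6lhs : Integrable (fun p : E × E =>
      -(lam / 2 * ‖a p.1 - a p.2‖ ^ 2 + M ^ 2 / (2 * lam) * ‖b p.1 - b p.2‖ ^ 2)) μ2 :=
    (iXlam2.add (iV.const_mul (M ^ 2 / (2 * lam)))).neg
  -- star identities
  have eq1 : I1 = -I2 - I5 :=
    star_lemma μ₀ hS hSnull gradW hgradW_cont hodd ψ hψ_meas hψMn hψeven
      a b cc b hac hbc hccc hbc hcceq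
  have eq2 : I3 = -I4 - I6 :=
    star_lemma μ₀ hS hSnull gradW hgradW_cont hodd ψ hψ_meas hψMn hψeven
      a b cc a hac hbc hccc hac hcceq
  -- pointwise integral bounds
  have hI5b : ψm * V ≤ I5 := by
    have hle : (fun p : E × E => ψm * ‖b p.1 - b p.2‖ ^ 2)
        ≤ fun p : E × E => ψ (a p.1 - a p.2) * ⟪b p.1 - b p.2, b p.1 - b p.2⟫ := by
      intro p
      simp only [real_inner_self_eq_norm_sq]
      exact mul_le_mul_of_nonneg_right (hψ_lb _) (by positivity)
    have h := integral_mono iVψm iI5 hle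
    rw [MeasureTheory.integral_const_mul] at h
    exact h
  have hI4b : lam * X ≤ I4 := by
    have hle : (fun p : E × E => lam * ‖a p.1 - a p.2‖ ^ 2)
        ≤ fun p : E × E => ⟪gradW (a p.1 - a p.2), a p.1 - a p.2⟫ := fun p => hconv1 _
    have h := integral_mono iXlam iI4 hle
    rw [MeasureTheory.integral_const_mul] at h
    exact h
  have hI6b : -(lam / 2 * X + M ^ 2 / (2 * lam) * V) ≤ I6 := by
    have hle : (fun p : E × E =>
        -(lam / 2 * ‖a p.1 - a p.2‖ ^ 2 + M ^ 2 / (2 * lam) * ‖b p.1 - b p.2‖ ^ 2))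
        ≤ fun p : E × E => ψ (a p.1 - a p.2) * ⟪b p.1 - b p.2, a p.1 - a p.2⟫ := by
      intro p
      set q := a p.1 - a p.2 with hq
      set r := b p.1 - b p.2 with hr
      show -(lam / 2 * ‖q‖ ^ 2 + M ^ 2 / (2 * lam) * ‖r‖ ^ 2) ≤ ψ q * ⟪r, q⟫
      have hn1 : -|(inner ℝ r q : ℝ)| ≤ (inner ℝ r q : ℝ) := neg_abs_le _
      have hn2 : |(inner ℝ r q : ℝ)| ≤ ‖r‖ * ‖q‖ := abs_real_inner_le_norm r q
      have h1 : ψ q * (-(‖r‖ * ‖q‖)) ≤ ψ q * ⟪r, q⟫ :=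
        mul_le_mul_of_nonneg_left (by linarith) (hψ_nonneg q)
      have h2 : ψ q * (‖r‖ * ‖q‖) ≤ M * (‖r‖ * ‖q‖) :=
        mul_le_mul_of_nonneg_right (hψub q) (by positivity)
      have h4 : M * (‖r‖ * ‖q‖) ≤ lam / 2 * ‖q‖ ^ 2 + M ^ 2 / (2 * lam) * ‖r‖ ^ 2 := by
        rw [← sub_nonneg]
        have e : lam / 2 * ‖q‖ ^ 2 + M ^ 2 / (2 * lam) * ‖r‖ ^ 2 - M * (‖r‖ * ‖q‖)
            = (lam * ‖q‖ - M * ‖r‖) ^ 2 / (2 * lam) := by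
          field_simp
          ring
        rw [e]
        positivity
      linarith
    have h := integral_mono iI6lhs iI6 hle
    have e : ∫ p, -(lam / 2 * ‖a p.1 - a p.2‖ ^ 2
        + M ^ 2 / (2 * lam) * ‖b p.1 - b p.2‖ ^ 2) ∂μ2
        = -(lam / 2 * X + M ^ 2 / (2 * lam) * V) := by
      rw [MeasureTheory.integral_neg, integral_add iXlam2 (iV.const_mul (M ^ 2 / (2 * lam))),
        MeasureTheory.integral_const_mul, MeasureTheory.integral_const_mul]
    rw [e] at h
    exact h
  have hPlow : lam / 2 * X ≤ P := by
    have h := integral_mono iXlam2 iP (fun p => hWlow _)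
    rw [MeasureTheory.integral_const_mul] at h
    exact h
  have hPup : P ≤ Lam / 2 * X := by
    have h := integral_mono iP iXLam2 (fun p => hWup _)
    rw [MeasureTheory.integral_const_mul] at h
    exact h
  have eXV : ∫ p, (‖a p.1 - a p.2‖ ^ 2 + ‖b p.1 - b p.2‖ ^ 2) ∂μ2 = X + V :=
    integral_add iX iV
  have hY2up : 2 * Y ≤ X + V := by
    have hle : (fun p : E × E => 2 * ⟪a p.1 - a p.2, b p.1 - b p.2⟫)
        ≤ fun p : E × E => ‖a p.1 - a p.2‖ ^ 2 + ‖b p.1 - b p.2‖ ^ 2 := by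
      intro p
      have habs := abs_real_inner_le_norm (a p.1 - a p.2) (b p.1 - b p.2)
      have := le_abs_self ⟪a p.1 - a p.2, b p.1 - b p.2⟫
      show 2 * ⟪a p.1 - a p.2, b p.1 - b p.2⟫
        ≤ ‖a p.1 - a p.2‖ ^ 2 + ‖b p.1 - b p.2‖ ^ 2
      nlinarith [sq_nonneg (‖a p.1 - a p.2‖ - ‖b p.1 - b p.2‖)]
    have h := integral_mono iY2 iXV hle
    rw [MeasureTheory.integral_const_mul, eXV] at h
    exact h
  have hY2low : -(X + V) ≤ 2 * Y := by
    have hle : (fun p : E × E => -(‖a p.1 - a p.2‖ ^ 2 + ‖b p.1 - b p.2‖ ^ 2))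
        ≤ fun p : E × E => 2 * ⟪a p.1 - a p.2, b p.1 - b p.2⟫ := by
      intro p
      have habs := abs_real_inner_le_norm (a p.1 - a p.2) (b p.1 - b p.2)
      have := neg_abs_le ⟪a p.1 - a p.2, b p.1 - b p.2⟫
      show -(‖a p.1 - a p.2‖ ^ 2 + ‖b p.1 - b p.2‖ ^ 2)
        ≤ 2 * ⟪a p.1 - a p.2, b p.1 - b p.2⟫
      nlinarith [sq_nonneg (‖a p.1 - a p.2‖ - ‖b p.1 - b p.2‖)]
    have h := integral_mono iXVn iY2 hle
    have e : ∫ p, -(‖a p.1 - a p.2‖ ^ 2 + ‖b p.1 - b p.2‖ ^ 2) ∂μ2 = -(X + V) := by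
      rw [MeasureTheory.integral_neg, eXV]
    rw [MeasureTheory.integral_const_mul, e] at h
    exact h
  -- value of the two main integrals
  have iVP2 : Integrable (fun p : E × E =>
      ‖b p.1 - b p.2‖ ^ 2 + 2 * (W (a p.1 - a p.2) - W 0)) μ2 := iV.add (iP.const_mul 2)
  have iYe : Integrable (fun p : E × E =>
      ε * ⟪a p.1 - a p.2, b p.1 - b p.2⟫) μ2 := iY.const_mul ε
  have hLval : ∫ p, (‖b p.1 - b p.2‖ ^ 2 + 2 * (W (a p.1 - a p.2) - W 0)
      + ε * ⟪a p.1 - a p.2, b p.1 - b p.2⟫) ∂μ2 = V + 2 * P + ε * Y := by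
    rw [integral_add iVP2 iYe, integral_add iV (iP.const_mul 2), MeasureTheory.integral_const_mul,
      MeasureTheory.integral_const_mul]
  have iG1 : Integrable (fun p : E × E =>
      2 * ⟪cc p.1 - cc p.2, b p.1 - b p.2⟫) μ2 := iI1.const_mul 2
  have iG2 : Integrable (fun p : E × E =>
      2 * ⟪gradW (a p.1 - a p.2), b p.1 - b p.2⟫) μ2 := iI2.const_mul 2
  have iG12 : Integrable (fun p : E × E =>
      2 * ⟪cc p.1 - cc p.2, b p.1 - b p.2⟫
        + 2 * ⟪gradW (a p.1 - a p.2), b p.1 - b p.2⟫) μ2 := iG1.add iG2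
  have iVI3 : Integrable (fun p : E × E =>
      ‖b p.1 - b p.2‖ ^ 2 + ⟪cc p.1 - cc p.2, a p.1 - a p.2⟫) μ2 := iV.add iI3
  have iVI3e : Integrable (fun p : E × E =>
      ε * (‖b p.1 - b p.2‖ ^ 2 + ⟪cc p.1 - cc p.2, a p.1 - a p.2⟫)) μ2 :=
    iVI3.const_mul ε
  have hGval : ∫ p, (2 * ⟪cc p.1 - cc p.2, b p.1 - b p.2⟫
      + 2 * ⟪gradW (a p.1 - a p.2), b p.1 - b p.2⟫
      + ε * (‖b p.1 - b p.2‖ ^ 2 + ⟪cc p.1 - cc p.2, a p.1 - a p.2⟫)) ∂μ2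
      = 2 * I1 + 2 * I2 + ε * (V + I3) := by
    rw [integral_add iG12 iVI3e, integral_add iG1 iG2, MeasureTheory.integral_const_mul,
      MeasureTheory.integral_const_mul, MeasureTheory.integral_const_mul, integral_add iV iI3]
  rw [hGval, hLval]
  constructor
  · -- dissipation estimate
    have hee : 2 * I1 + 2 * I2 + ε * (V + I3) = -2 * I5 + ε * V - ε * I4 - ε * I6 := by
      rw [eq1, eq2]; ring
    have e4 : ε * (lam * X) ≤ ε * I4 := mul_le_mul_of_nonneg_left hI4b hε0.le
    have e6 : ε * (-(lam / 2 * X + M ^ 2 / (2 * lam) * V)) ≤ ε * I6 :=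
      mul_le_mul_of_nonneg_left hI6b hε0.le
    have e7 : ε * (1 + M ^ 2 / (2 * lam)) * V ≤ ψm * V :=
      mul_le_mul_of_nonneg_right hεψ hV0
    have hup : 2 * I1 + 2 * I2 + ε * (V + I3) ≤ -(ψm * V) - ε * lam / 2 * X := by
      rw [hee]
      linarith [hI5b, e4, e6, e7]
    have hεY : ε * (2 * Y) ≤ ε * (X + V) := mul_le_mul_of_nonneg_left hY2up hε0.le
    have hLub : V + 2 * P + ε * Y ≤ (1 + ε / 2) * V + (Lam + ε / 2) * X := by
      linarith [hPup, hεY]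
    have hcL : c * (V + 2 * P + ε * Y) ≤ c * ((1 + ε / 2) * V + (Lam + ε / 2) * X) :=
      mul_le_mul_of_nonneg_left hLub hc0.le
    have k1 : c * (1 + ε / 2) ≤ ψm := by
      have h1 : c * (1 + ε / 2) ≤ (ψm / 2) * (1 + ε / 2) :=
        mul_le_mul_of_nonneg_right hc2 (by linarith)
      have h2 : (ψm / 2) * (1 + ε / 2) ≤ (ψm / 2) * 2 :=
        mul_le_mul_of_nonneg_left (by linarith) (by linarith)
      linarith
    have k2 : c * (Lam + ε / 2) ≤ ε * lam / 2 := by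
      have h1 : c * (Lam + ε / 2) ≤ c * (Lam + 1) :=
        mul_le_mul_of_nonneg_left (by linarith) hc0.le
      linarith [hc1]
    have k1' : c * ((1 + ε / 2) * V) ≤ ψm * V := by
      rw [← mul_assoc]
      exact mul_le_mul_of_nonneg_right k1 hV0
    have k2' : c * ((Lam + ε / 2) * X) ≤ ε * lam / 2 * X := by
      rw [← mul_assoc]
      exact mul_le_mul_of_nonneg_right k2 hX0
    linarith [hup, hcL, k1', k2']
  · -- coercivity from below
    have h1 : ε * (-(X + V)) ≤ ε * (2 * Y) := mul_le_mul_of_nonneg_left hY2low hε0.le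
    have hc₀lam : c₀ * X ≤ lam / 2 * X := by
      have hh : c₀ ≤ lam / 2 := by
        rw [hc₀]
        have := min_le_left lam 1
        linarith
      exact mul_le_mul_of_nonneg_right hh hX0
    have hc₀1 : c₀ * V ≤ 1 / 2 * V := by
      have hh : c₀ ≤ 1 / 2 := by
        rw [hc₀]
        have := min_le_right lam 1
        linarith
      exact mul_le_mul_of_nonneg_right hh hV0
    have hεX : ε * X ≤ lam * X := mul_le_mul_of_nonneg_right hεlam hX0
    have hεV : ε * V ≤ 1 * V := mul_le_mul_of_nonneg_right hε1 hV0
    linarith [hPlow, h1, hc₀lam, hc₀1, hεX, hεV]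

end PerTime


/-- Proposition 6.1 (ii): for the multi-dimensional Lagrangian alignment
system with a (λ,Λ)-convex interaction potential and a communication weight bounded below
by a positive constant and weakly singular (exponent α ∈ (0,2)) near the origin, the
L²-type deviation of positions and velocities decays algebraically like `t^{-(2-α)/α}`. -/
theorem stmt_18 (d : ℕ) (hd : 1 ≤ d)
    (μ₀ : Measure (EuclideanSpace ℝ (Fin d))) [IsProbabilityMeasure μ₀]
    (hsupp_cpt : IsCompact (msupp μ₀))
    (W : EuclideanSpace ℝ (Fin d) → ℝ)
    (gradW : EuclideanSpace ℝ (Fin d) → EuclideanSpace ℝ (Fin d))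
    (hW_grad : ∀ x, HasGradientAt W (gradW x) x)
    (hgradW_cont : Continuous gradW)
    (hW_symm : ∀ x, W (-x) = W x)
    (lam Lam : ℝ) (hlam : 0 < lam) (hLam : lam ≤ Lam)
    (hW_convex : ∀ x y : EuclideanSpace ℝ (Fin d),
      lam * ‖x - y‖ ^ 2 ≤ ⟪gradW x - gradW y, x - y⟫ ∧
        ⟪gradW x - gradW y, x - y⟫ ≤ Lam * ‖x - y‖ ^ 2)
    (ψ : EuclideanSpace ℝ (Fin d) → ℝ)
    (hψ_meas : Measurable ψ)
    (hψ_nonneg : ∀ x, 0 ≤ ψ x)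
    (hψ_radial_anti : ∀ x y : EuclideanSpace ℝ (Fin d), ‖x‖ ≤ ‖y‖ → ψ y ≤ ψ x)
    (η v vt : ℝ → EuclideanSpace ℝ (Fin d) → EuclideanSpace ℝ (Fin d))
    (hη_cont : Continuous (fun p : ℝ × EuclideanSpace ℝ (Fin d) => η p.1 p.2))
    (hv_cont : Continuous (fun p : ℝ × EuclideanSpace ℝ (Fin d) => v p.1 p.2))
    (hvt_cont : Continuous (fun p : ℝ × EuclideanSpace ℝ (Fin d) => vt p.1 p.2))
    (hη_deriv : ∀ x, ∀ t ∈ Set.Ici (0:ℝ),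
      HasDerivWithinAt (fun s => η s x) (v t x) (Set.Ici (0:ℝ)) t)
    (hv_deriv : ∀ x, ∀ t ∈ Set.Ici (0:ℝ),
      HasDerivWithinAt (fun s => v s x) (vt t x) (Set.Ici (0:ℝ)) t)
    (heq : ∀ t : ℝ, 0 ≤ t → ∀ x ∈ msupp μ₀,
      vt t x = -(∫ y, gradW (η t x - η t y) ∂μ₀)
        - ∫ y, ψ (η t x - η t y) • (v t x - v t y) ∂μ₀)
    (ψm : ℝ) (hψm : 0 < ψm) (hψ_lb : ∀ x, ψm ≤ ψ x)
    (α R B : ℝ) (hα : α ∈ Set.Ioo (0:ℝ) 2) (hR : 0 < R) (hB : 0 < B)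
    (hψ_ub : ∀ x : EuclideanSpace ℝ (Fin d), 0 < ‖x‖ → ‖x‖ ≤ R →
      ψ x ≤ B * ‖x‖ ^ (-α)) :
    ∃ C : ℝ, 0 < C ∧ ∀ t : ℝ, 1 ≤ t →
      ∫ x, ∫ y, (‖η t x - η t y‖ ^ 2 + ‖v t x - v t y‖ ^ 2) ∂μ₀ ∂μ₀ ≤
        C * t ^ (-((2 - α) / α)) := by
  -- notation
  set S := msupp μ₀ with hSdef
  have hSnull : μ₀ Sᶜ = 0 := msupp_compl_null μ₀
  have hSm : MeasurableSet S := (msupp_isClosed μ₀).measurableSet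
  set μ2 := μ₀.prod μ₀ with hμ2
  have hK2 : IsCompact (S ×ˢ S) := hsupp_cpt.prod hsupp_cpt
  have hK2m : MeasurableSet (S ×ˢ S) := hK2.isClosed.measurableSet
  have hμK2 : μ2 (S ×ˢ S)ᶜ = 0 := prod_compl_null hSm hSnull
  -- basic facts about W and ψ
  have hW_cont : Continuous W :=
    continuous_iff_continuousAt.2 fun x => (hW_grad x).hasFDerivAt.continuousAt
  have hodd : ∀ x, gradW (-x) = -gradW x := grad_odd hW_grad hW_symm
  have h0 : gradW 0 = 0 := grad_zero hW_grad hW_symm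
  have hWb := W_bounds hW_grad hgradW_cont h0 hW_convex
  have hWlow : ∀ z : EuclideanSpace ℝ (Fin d), lam / 2 * ‖z‖ ^ 2 ≤ W z - W 0 :=
    fun z => (hWb z).1
  have hWup : ∀ z : EuclideanSpace ℝ (Fin d), W z - W 0 ≤ Lam / 2 * ‖z‖ ^ 2 :=
    fun z => (hWb z).2
  have hconv1 : ∀ z : EuclideanSpace ℝ (Fin d), lam * ‖z‖ ^ 2 ≤ ⟪gradW z, z⟫ := by
    intro z
    have h := (hW_convex z 0).1
    simp only [h0, sub_zero] at h
    exact h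
  have hψub : ∀ z, ψ z ≤ ψ 0 := fun z => hψ_radial_anti 0 z (by simp)
  have hψeven : ∀ z : EuclideanSpace ℝ (Fin d), ψ (-z) = ψ z := fun z =>
    le_antisymm (hψ_radial_anti z (-z) (by simp)) (hψ_radial_anti (-z) z (by simp))
  have hM0 : 0 < ψ 0 := lt_of_lt_of_le hψm (hψ_lb 0)
  -- constants
  set cψ := 1 + (ψ 0) ^ 2 / (2 * lam) with hcψdef
  have hcψ : 0 < cψ := by rw [hcψdef]; positivity
  set ε := min (min 1 lam) (ψm / cψ) with hεdef
  have hε0 : 0 < ε := lt_min (lt_min one_pos hlam) (div_pos hψm hcψ)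
  have hε1 : ε ≤ 1 := le_trans (min_le_left _ _) (min_le_left _ _)
  have hεlam : ε ≤ lam := le_trans (min_le_left _ _) (min_le_right _ _)
  have hεψ : ε * cψ ≤ ψm := by
    have h := min_le_right (min 1 lam) (ψm / cψ)
    calc ε * cψ ≤ ψm / cψ * cψ := mul_le_mul_of_nonneg_right h hcψ.le
      _ = ψm := div_mul_cancel₀ _ hcψ.ne'
  have hLam1 : (0:ℝ) < Lam + 1 := by linarith
  set c := min (ε * lam / (2 * (Lam + 1))) (ψm / 2) with hcdef
  have hc0 : 0 < c := lt_min (by positivity) (by positivity)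
  have hc1 : c * (Lam + 1) ≤ ε * lam / 2 := by
    have h := min_le_left (ε * lam / (2 * (Lam + 1))) (ψm / 2)
    calc c * (Lam + 1) ≤ ε * lam / (2 * (Lam + 1)) * (Lam + 1) :=
          mul_le_mul_of_nonneg_right h hLam1.le
      _ = ε * lam / 2 := by field_simp
  have hc2 : c ≤ ψm / 2 := min_le_right _ _
  set c₀ := min lam 1 / 2 with hc₀def
  have hc₀0 : 0 < c₀ := by
    rw [hc₀def]
    exact div_pos (lt_min hlam one_pos) two_pos
  -- section continuity
  have hat : ∀ t : ℝ, Continuous (η t) := fun t =>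
    hη_cont.comp (continuous_const.prodMk continuous_id)
  have hbt : ∀ t : ℝ, Continuous (v t) := fun t =>
    hv_cont.comp (continuous_const.prodMk continuous_id)
  have hct : ∀ t : ℝ, Continuous (vt t) := fun t =>
    hvt_cont.comp (continuous_const.prodMk continuous_id)
  -- μ2-level integrability for continuous integrands
  have int2R : ∀ g : EuclideanSpace ℝ (Fin d) × EuclideanSpace ℝ (Fin d) → ℝ,
      Continuous g → Integrable g μ2 := by
    intro g hg
    obtain ⟨C, hC⟩ := hK2.exists_bound_of_continuousOn hg.continuousOn
    exact Integrable.mono' (integrable_const C) hg.aestronglyMeasurable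
      ((ae_memK'' hμK2).mono fun p hp => hC p hp)
  -- joint continuity of the Lyapunov integrand and its time derivative
  have hη2 : Continuous (fun q : ℝ × (EuclideanSpace ℝ (Fin d) × EuclideanSpace ℝ (Fin d)) =>
      η q.1 q.2.1 - η q.1 q.2.2) :=
    (hη_cont.comp (continuous_fst.prodMk (continuous_fst.comp continuous_snd))).sub
      (hη_cont.comp (continuous_fst.prodMk (continuous_snd.comp continuous_snd)))
  have hv2 : Continuous (fun q : ℝ × (EuclideanSpace ℝ (Fin d) × EuclideanSpace ℝ (Fin d)) =>
      v q.1 q.2.1 - v q.1 q.2.2) :=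
    (hv_cont.comp (continuous_fst.prodMk (continuous_fst.comp continuous_snd))).sub
      (hv_cont.comp (continuous_fst.prodMk (continuous_snd.comp continuous_snd)))
  have hvt2 : Continuous (fun q : ℝ × (EuclideanSpace ℝ (Fin d) × EuclideanSpace ℝ (Fin d)) =>
      vt q.1 q.2.1 - vt q.1 q.2.2) :=
    (hvt_cont.comp (continuous_fst.prodMk (continuous_fst.comp continuous_snd))).sub
      (hvt_cont.comp (continuous_fst.prodMk (continuous_snd.comp continuous_snd)))
  have hLFc : Continuous (Function.uncurry
      (fun (s : ℝ) (p : EuclideanSpace ℝ (Fin d) × EuclideanSpace ℝ (Fin d)) =>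
        ‖v s p.1 - v s p.2‖ ^ 2 + 2 * (W (η s p.1 - η s p.2) - W 0)
          + ε * ⟪η s p.1 - η s p.2, v s p.1 - v s p.2⟫)) := by
    exact ((hv2.norm.pow 2).add
      (continuous_const.mul ((hW_cont.comp hη2).sub continuous_const))).add
      (continuous_const.mul (hη2.inner hv2))
  have hLGc : Continuous (Function.uncurry
      (fun (t : ℝ) (p : EuclideanSpace ℝ (Fin d) × EuclideanSpace ℝ (Fin d)) =>
        2 * ⟪vt t p.1 - vt t p.2, v t p.1 - v t p.2⟫
          + 2 * ⟪gradW (η t p.1 - η t p.2), v t p.1 - v t p.2⟫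
          + ε * (‖v t p.1 - v t p.2‖ ^ 2 + ⟪vt t p.1 - vt t p.2, η t p.1 - η t p.2⟫))) := by
    exact ((continuous_const.mul (hvt2.inner hv2)).add
      (continuous_const.mul ((hgradW_cont.comp hη2).inner hv2))).add
      (continuous_const.mul ((hv2.norm.pow 2).add (hvt2.inner hη2)))
  -- pointwise time derivative
  have hptw : ∀ p : EuclideanSpace ℝ (Fin d) × EuclideanSpace ℝ (Fin d), ∀ t, 0 ≤ t →
      HasDerivWithinAt
        (fun s => ‖v s p.1 - v s p.2‖ ^ 2 + 2 * (W (η s p.1 - η s p.2) - W 0)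
          + ε * ⟪η s p.1 - η s p.2, v s p.1 - v s p.2⟫)
        (2 * ⟪vt t p.1 - vt t p.2, v t p.1 - v t p.2⟫
          + 2 * ⟪gradW (η t p.1 - η t p.2), v t p.1 - v t p.2⟫
          + ε * (‖v t p.1 - v t p.2‖ ^ 2 + ⟪vt t p.1 - vt t p.2, η t p.1 - η t p.2⟫))
        (Set.Ici (0:ℝ)) t := by
    intro p t ht
    have hA : HasDerivWithinAt (fun s => η s p.1 - η s p.2) (v t p.1 - v t p.2)
        (Set.Ici (0:ℝ)) t := (hη_deriv p.1 t ht).sub (hη_deriv p.2 t ht)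
    have hB : HasDerivWithinAt (fun s => v s p.1 - v s p.2) (vt t p.1 - vt t p.2)
        (Set.Ici (0:ℝ)) t := (hv_deriv p.1 t ht).sub (hv_deriv p.2 t ht)
    have term1 := deriv_normsq hB
    have term2 := ((comp_grad_deriv hW_grad hA).sub_const (W 0)).const_mul (2:ℝ)
    have term3 := (HasDerivWithinAt.inner ℝ hA hB).const_mul ε
    have hsum := (term1.add term2).add term3
    refine hsum.congr_deriv ?_
    rw [real_inner_self_eq_norm_sq, real_inner_comm (vt t p.1 - vt t p.2)]
    ring
  -- the Lyapunov function and its derivative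
  set Lf : ℝ → ℝ := fun s => ∫ p, (‖v s p.1 - v s p.2‖ ^ 2
    + 2 * (W (η s p.1 - η s p.2) - W 0)
    + ε * ⟪η s p.1 - η s p.2, v s p.1 - v s p.2⟫) ∂μ2 with hLfdef
  set Gf : ℝ → ℝ := fun t => ∫ p, (2 * ⟪vt t p.1 - vt t p.2, v t p.1 - v t p.2⟫
    + 2 * ⟪gradW (η t p.1 - η t p.2), v t p.1 - v t p.2⟫
    + ε * (‖v t p.1 - v t p.2‖ ^ 2 + ⟪vt t p.1 - vt t p.2, η t p.1 - η t p.2⟫)) ∂μ2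
    with hGfdef
  have hLcont : Continuous Lf := cont_param_integral hK2 hμK2 hLFc
  have hLd : ∀ t, 0 ≤ t → HasDerivWithinAt Lf (Gf t) (Set.Ici (0:ℝ)) t := fun t ht =>
    deriv_param_integral hK2 hK2m hμK2 hLFc hLGc hptw ht
  -- the main per-time estimate
  have hmain : ∀ t : ℝ, 0 ≤ t →
      Gf t ≤ -c * Lf t ∧
      c₀ * ((∫ p, ‖η t p.1 - η t p.2‖ ^ 2 ∂μ2) + ∫ p, ‖v t p.1 - v t p.2‖ ^ 2 ∂μ2)
        ≤ Lf t := by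
    intro t ht
    exact per_time_bound μ₀ hsupp_cpt hSnull W hW_cont gradW hgradW_cont hodd hlam hLam
      hconv1 hWlow hWup ψ hψ_meas hψm hψ_lb hψub hψ_nonneg hψeven
      (η t) (v t) (vt t) (hat t) (hbt t) (hct t) (fun x hx => heq t ht x hx)
      hε0 hε1 hεlam hεψ hc0 hc1 hc2 rfl
  have hL0 : 0 ≤ Lf 0 := by
    have h := (hmain 0 le_rfl).2
    have hX0 : 0 ≤ ∫ p, ‖η 0 p.1 - η 0 p.2‖ ^ 2 ∂μ2 := integral_nonneg fun p => by positivity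
    have hV0 : 0 ≤ ∫ p, ‖v 0 p.1 - v 0 p.2‖ ^ 2 ∂μ2 := integral_nonneg fun p => by positivity
    nlinarith
  -- Grönwall
  have gron : ∀ T : ℝ, 0 ≤ T → Lf T ≤ Lf 0 * Real.exp (-c * T) := by
    intro T hT
    have h := le_gronwallBound_of_liminf_deriv_right_le (f := Lf) (f' := Gf)
      (δ := Lf 0) (K := -c) (ε := 0) (a := 0) (b := T)
      (hLcont.continuousOn)
      (fun x hx r hr => ((hLd x hx.1).mono (Set.Ici_subset_Ici.mpr hx.1)).liminf_right_slope_le hr)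
      le_rfl
      (fun x hx => by
        have := (hmain x hx.1).1
        linarith)
      T (Set.mem_Icc.2 ⟨hT, le_rfl⟩)
    rwa [sub_zero, gronwallBound_ε0] at h
  -- exponent bookkeeping
  set β := (2 - α) / α with hβdef
  have hβ : 0 < β := by
    rw [hβdef]
    exact div_pos (by linarith [hα.2]) hα.1
  set n : ℕ := ⌈β⌉₊ + 1 with hndef
  have hn0 : (0:ℝ) < n := by
    rw [hndef]
    positivity
  have hβn : β ≤ (n : ℝ) := by
    refine le_trans (Nat.le_ceil β) ?_
    rw [hndef]
    push_cast
    linarith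
  set K := ((n : ℝ) / c) ^ n with hKdef
  have hK0 : 0 < K := by
    rw [hKdef]
    positivity
  have hexp : ∀ T : ℝ, 1 ≤ T → Real.exp (-c * T) ≤ K * T ^ (-β) := by
    intro T hT
    have hT0 : (0:ℝ) < T := by linarith
    have h1 : T ^ β ≤ T ^ ((n : ℕ) : ℝ) := Real.rpow_le_rpow_of_exponent_le hT hβn
    have h2 : T ^ ((n : ℕ) : ℝ) = T ^ (n : ℕ) := Real.rpow_natCast T n
    have hcne : (c:ℝ) ≠ 0 := ne_of_gt hc0
    have hnne : (n:ℝ) ≠ 0 := ne_of_gt hn0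
    have hxe : c * T / (n : ℝ) ≤ Real.exp (c * T / (n : ℝ)) := by
      linarith [Real.add_one_le_exp (c * T / (n : ℝ))]
    have h4 : (c * T / (n : ℝ)) ^ (n : ℕ) ≤ (Real.exp (c * T / (n : ℝ))) ^ (n : ℕ) :=
      pow_le_pow_left₀ (by positivity) hxe n
    have h5 : (Real.exp (c * T / (n : ℝ))) ^ (n : ℕ) = Real.exp (c * T) := by
      rw [← Real.exp_nat_mul]
      congr 1
      field_simp
    have h6 : T ^ (n : ℕ) = K * (c * T / (n : ℝ)) ^ (n : ℕ) := by
      rw [hKdef, ← mul_pow]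
      congr 1
      field_simp
    have h7 : T ^ β ≤ K * Real.exp (c * T) := by
      rw [← h5]
      calc T ^ β ≤ T ^ (n : ℕ) := by rw [← h2]; exact h1
        _ = K * (c * T / (n : ℝ)) ^ (n : ℕ) := h6
        _ ≤ K * (Real.exp (c * T / (n : ℝ))) ^ (n : ℕ) :=
            mul_le_mul_of_nonneg_left h4 hK0.le
    have hTβ : 0 < T ^ β := Real.rpow_pos_of_pos hT0 β
    have hec : 0 < Real.exp (c * T) := Real.exp_pos _
    rw [Real.rpow_neg hT0.le, neg_mul, Real.exp_neg, ← div_eq_mul_inv, le_div_iff₀ hTβ]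
    rw [inv_mul_le_iff₀ hec]
    linarith [h7]
  -- final constant
  refine ⟨(Lf 0 / c₀ + 1) * K, by positivity, ?_⟩
  intro T hT
  have hT0 : (0:ℝ) ≤ T := by linarith
  -- identify the goal integral
  have hηT : Continuous (fun p : EuclideanSpace ℝ (Fin d) × EuclideanSpace ℝ (Fin d) =>
      η T p.1 - η T p.2) := ((hat T).comp continuous_fst).sub ((hat T).comp continuous_snd)
  have hvT : Continuous (fun p : EuclideanSpace ℝ (Fin d) × EuclideanSpace ℝ (Fin d) =>
      v T p.1 - v T p.2) := ((hbt T).comp continuous_fst).sub ((hbt T).comp continuous_snd)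
  have iXT : Integrable (fun p : EuclideanSpace ℝ (Fin d) × EuclideanSpace ℝ (Fin d) =>
      ‖η T p.1 - η T p.2‖ ^ 2) μ2 := int2R _ (hηT.norm.pow 2)
  have iVT : Integrable (fun p : EuclideanSpace ℝ (Fin d) × EuclideanSpace ℝ (Fin d) =>
      ‖v T p.1 - v T p.2‖ ^ 2) μ2 := int2R _ (hvT.norm.pow 2)
  have iST : Integrable (fun p : EuclideanSpace ℝ (Fin d) × EuclideanSpace ℝ (Fin d) =>
      ‖η T p.1 - η T p.2‖ ^ 2 + ‖v T p.1 - v T p.2‖ ^ 2) μ2 := iXT.add iVT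
  have hgoal_eq : ∫ x, ∫ y, (‖η T x - η T y‖ ^ 2 + ‖v T x - v T y‖ ^ 2) ∂μ₀ ∂μ₀
      = (∫ p, ‖η T p.1 - η T p.2‖ ^ 2 ∂μ2) + ∫ p, ‖v T p.1 - v T p.2‖ ^ 2 ∂μ2 := by
    have e1 : ∫ p, (‖η T p.1 - η T p.2‖ ^ 2 + ‖v T p.1 - v T p.2‖ ^ 2) ∂μ2
        = ∫ x, ∫ y, (‖η T x - η T y‖ ^ 2 + ‖v T x - v T y‖ ^ 2) ∂μ₀ ∂μ₀ :=
      MeasureTheory.integral_prod _ iST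
    rw [← e1]
    exact integral_add iXT iVT
  rw [hgoal_eq]
  -- chain of estimates
  have hlow := (hmain T hT0).2
  have hgr := gron T hT0
  have hXV : (∫ p, ‖η T p.1 - η T p.2‖ ^ 2 ∂μ2) + ∫ p, ‖v T p.1 - v T p.2‖ ^ 2 ∂μ2
      ≤ Lf 0 * Real.exp (-c * T) / c₀ := by
    rw [le_div_iff₀ hc₀0]
    calc ((∫ p, ‖η T p.1 - η T p.2‖ ^ 2 ∂μ2) + ∫ p, ‖v T p.1 - v T p.2‖ ^ 2 ∂μ2) * c₀
        = c₀ * ((∫ p, ‖η T p.1 - η T p.2‖ ^ 2 ∂μ2)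
            + ∫ p, ‖v T p.1 - v T p.2‖ ^ 2 ∂μ2) := by ring
      _ ≤ Lf T := hlow
      _ ≤ Lf 0 * Real.exp (-c * T) := hgr
  calc (∫ p, ‖η T p.1 - η T p.2‖ ^ 2 ∂μ2) + ∫ p, ‖v T p.1 - v T p.2‖ ^ 2 ∂μ2
      ≤ Lf 0 * Real.exp (-c * T) / c₀ := hXV
    _ = (Lf 0 / c₀) * Real.exp (-c * T) := by ring
    _ ≤ (Lf 0 / c₀) * (K * T ^ (-β)) :=
        mul_le_mul_of_nonneg_left (hexp T hT) (div_nonneg hL0 hc₀0.le)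
    _ = (Lf 0 / c₀) * K * T ^ (-β) := by ring
    _ ≤ (Lf 0 / c₀ + 1) * K * T ^ (-β) := by
        have hr : (0:ℝ) ≤ T ^ (-β) := Real.rpow_nonneg (by linarith) _
        have hm : (Lf 0 / c₀) * K ≤ (Lf 0 / c₀ + 1) * K :=
          mul_le_mul_of_nonneg_right (by linarith) hK0.le
        exact mul_le_mul_of_nonneg_right hm hr
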